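/- arXiv:2601.13080 — 2 statements merged into one kernel-verified Lean document; each statement's English description precedes it below -/
import Mathlib

section
/- The logarithmic mean is concave on (0,∞)×(0,∞): for all u₁,v₁,u₂,v₂ > 0 and t ∈ [0,1], θ(t·u₁ + (1−t)·u₂, t·v₁ + (1−t)·v₂) ≥ t·θ(u₁,v₁) + (1−t)·θ(u₂,v₂). -/
/-- The logarithmic mean. -/
noncomputable def logMean (u v : ℝ) : ℝ :=
  if u = v then v else (u - v) / (Real.log u - Real.log v)

/-!
The logarithmic mean is an average of weighted geometric means,
`θ(u, v) = ∫₀¹ u ^ s * v ^ (1 - s) ds`, and each weighted geometric mean is concave on the open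
quadrant; an integral of concave functions is concave.
-/

open Real Set MeasureTheory

/- `(u, v) ↦ u ^ s * v ^ (1 - s)` is positively homogeneous, so its tangent plane at `(U, V)` is
the linear form on the right; weighted AM-GM for `u / U` and `v / V` puts the graph below it. -/
theorem rpow_mul_rpow_le_tangent {s u v U V : ℝ} (hs₀ : 0 ≤ s) (hs₁ : s ≤ 1)
    (hu : 0 ≤ u) (hv : 0 ≤ v) (hU : 0 < U) (hV : 0 < V) :
    u ^ s * v ^ (1 - s) ≤ (s * (u / U) + (1 - s) * (v / V)) * (U ^ s * V ^ (1 - s)) := by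
  have amgm := geom_mean_le_arith_mean2_weighted hs₀ (sub_nonneg.2 hs₁)
    (div_nonneg hu hU.le) (div_nonneg hv hV.le) (add_sub_cancel s 1)
  rwa [div_rpow hu hU.le, div_rpow hv hV.le, div_mul_div_comm,
    div_le_iff₀ (by positivity)] at amgm

theorem concaveOn_rpow_mul_rpow {s : ℝ} (hs₀ : 0 ≤ s) (hs₁ : s ≤ 1) :
    ConcaveOn ℝ (Ioi 0 ×ˢ Ioi 0) fun p : ℝ × ℝ ↦ p.1 ^ s * p.2 ^ (1 - s) := by
  have hconv : Convex ℝ (Ioi (0 : ℝ) ×ˢ Ioi (0 : ℝ)) := (convex_Ioi 0).prod (convex_Ioi 0)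
  refine ⟨hconv, ?_⟩
  rintro ⟨u₁, v₁⟩ ⟨hu₁, hv₁⟩ ⟨u₂, v₂⟩ ⟨hu₂, hv₂⟩ a b ha hb hab
  obtain ⟨hU, hV⟩ := hconv ⟨hu₁, hv₁⟩ ⟨hu₂, hv₂⟩ ha hb hab
  simp only [mem_Ioi, Prod.smul_mk, Prod.mk_add_mk, smul_eq_mul] at *
  set U := a * u₁ + b * u₂
  set V := a * v₁ + b * v₂
  have tangent {u v : ℝ} (hu : 0 < u) (hv : 0 < v) :=
    rpow_mul_rpow_le_tangent hs₀ hs₁ hu.le hv.le hU hV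
  calc a * (u₁ ^ s * v₁ ^ (1 - s)) + b * (u₂ ^ s * v₂ ^ (1 - s))
      ≤ a * ((s * (u₁ / U) + (1 - s) * (v₁ / V)) * (U ^ s * V ^ (1 - s))) +
          b * ((s * (u₂ / U) + (1 - s) * (v₂ / V)) * (U ^ s * V ^ (1 - s))) :=
        add_le_add (mul_le_mul_of_nonneg_left (tangent hu₁ hv₁) ha)
          (mul_le_mul_of_nonneg_left (tangent hu₂ hv₂) hb)
    _ = U ^ s * V ^ (1 - s) := by
        field_simp
        ring

theorem concaveOn_intervalIntegral {E : Type*} [AddCommGroup E] [Module ℝ E] {D : Set E}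
    {F : ℝ → E → ℝ} {a b : ℝ} (hab : a ≤ b) (hF : ∀ s ∈ Icc a b, ConcaveOn ℝ D (F s))
    (hint : ∀ x ∈ D, IntervalIntegrable (fun s ↦ F s x) volume a b) :
    ConcaveOn ℝ D fun x ↦ ∫ s in a..b, F s x := by
  have hD : Convex ℝ D := (hF a ⟨le_rfl, hab⟩).1
  refine ⟨hD, fun x hx y hy c d hc hd hcd ↦ ?_⟩
  have hcx := (hint x hx).const_mul c
  have hdy := (hint y hy).const_mul d
  simp only [smul_eq_mul]
  rw [← intervalIntegral.integral_const_mul, ← intervalIntegral.integral_const_mul,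
    ← intervalIntegral.integral_add hcx hdy]
  exact intervalIntegral.integral_mono_on hab (hcx.add hdy) (hint _ (hD hx hy hc hd hcd))
    fun s hs ↦ (hF s hs).2 hx hy hc hd hcd

theorem logMean_eq_integral {u v : ℝ} (hu : 0 < u) (hv : 0 < v) :
    logMean u v = ∫ s in (0 : ℝ)..1, u ^ s * v ^ (1 - s) := by
  rcases eq_or_ne u v with rfl | huv
  · simp [logMean, ← rpow_add hu]
  have hL : log u - log v ≠ 0 := sub_ne_zero.2 fun h ↦ huv (log_injOn_pos hu hv h)
  have hexp (s : ℝ) : u ^ s * v ^ (1 - s) = exp ((log u - log v) * s + log v) := by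
    rw [rpow_def_of_pos hu, rpow_def_of_pos hv, ← exp_add]
    ring_nf
  simp only [hexp, logMean, if_neg huv]
  rw [intervalIntegral.integral_comp_mul_add (fun x ↦ exp x) hL, integral_exp]
  simp [exp_log hu, exp_log hv, div_eq_inv_mul]

theorem concaveOn_logMean :
    ConcaveOn ℝ (Ioi 0 ×ˢ Ioi 0) fun p : ℝ × ℝ ↦ logMean p.1 p.2 := by
  refine (concaveOn_intervalIntegral zero_le_one (fun s hs ↦ concaveOn_rpow_mul_rpow hs.1 hs.2)
    ?_).congr fun p hp ↦ (logMean_eq_integral hp.1 hp.2).symm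
  rintro ⟨u, v⟩ ⟨hu, hv⟩
  have : Continuous fun s : ℝ ↦ u ^ s * v ^ (1 - s) := by
    fun_prop (disch := exact ne_of_gt ‹_›)
  exact this.intervalIntegrable 0 1

/-- The logarithmic mean is concave on (0,∞)×(0,∞). -/
theorem logMean_concave (u₁ v₁ u₂ v₂ t : ℝ)
    (hu₁ : 0 < u₁) (hv₁ : 0 < v₁) (hu₂ : 0 < u₂) (hv₂ : 0 < v₂)
    (ht : t ∈ Set.Icc (0:ℝ) 1) :
    t * logMean u₁ v₁ + (1 - t) * logMean u₂ v₂
      ≤ logMean (t * u₁ + (1 - t) * u₂) (t * v₁ + (1 - t) * v₂) := by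
  simpa using concaveOn_logMean.2 (x := (u₁, v₁)) (y := (u₂, v₂)) ⟨hu₁, hv₁⟩ ⟨hu₂, hv₂⟩
    ht.1 (sub_nonneg.2 ht.2) (add_sub_cancel t 1)
end

section
/- The extended-valued function α(v,s,t) = v²/θ(s,t) (with the conventions 0²/0 = 0 and v²/0 = +∞ for v ≠ 0) is lower semicontinuous on ℝ × [0,∞)². -/
open scoped ENNReal

/-- The logarithmic mean, extended by 0 on the boundary of [0,∞)². -/
noncomputable def logMean0 (u v : ℝ) : ℝ :=
  if u ≤ 0 ∨ v ≤ 0 then 0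
  else if u = v then v else (u - v) / (Real.log u - Real.log v)

/-- The extended-valued action density α(v,s,t) = v²/θ(s,t), with the conventions
    0²/0 = 0 and v²/0 = +∞ for v ≠ 0. -/
noncomputable def alphaE (v s t : ℝ) : ℝ≥0∞ :=
  if logMean0 s t = 0 then (if v = 0 then 0 else ⊤)
  else ENNReal.ofReal (v ^ 2 / logMean0 s t)

/-! In `ℝ≥0∞`, `x / 0 = ⊤` for `x ≠ 0` and `0 / 0 = 0`, so `α(v,s,t) = v² / θ(s,t)` is an honest
quotient there. Division on `ℝ≥0∞` is continuous away from `0 / 0`, and at `0 / 0` the value `0` is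
the bottom, so a quotient of continuous finite-valued functions is lower semicontinuous. It remains
to see that `θ`, extended by `0`, is continuous on `ℝ²`. On the open quadrant `θ(u,v)` lies between
`min u v` and `max u v` (from `log x ≤ x - 1`), which gives continuity on the diagonal; near a
boundary point `(0,t)` with `t > 0` it is at most `v / (log v - log u)`, which tends to `0`
because `log u → -∞`. -/

open Filter Function Real Set Topology

theorem ENNReal.lowerSemicontinuous_div {X : Type*} [TopologicalSpace X] {f g : X → ℝ≥0∞}
    (hf : Continuous f) (hg : Continuous g) (hg_top : ∀ x, g x ≠ ∞) :
    LowerSemicontinuous fun x => f x / g x := by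
  intro x
  by_cases h : f x = 0 ∧ g x = 0
  · intro y hy
    simp [h] at hy
  · rw [not_and_or] at h
    exact ContinuousAt.lowerSemicontinuousAt
      (ENNReal.Tendsto.div (hf.tendsto x) h (hg.tendsto x) (.inl (hg_top x)))

section logMean0

variable {u v : ℝ}

theorem logMean0_of_nonpos (h : u ≤ 0 ∨ v ≤ 0) : logMean0 u v = 0 := if_pos h

theorem logMean0_self (hu : 0 < u) : logMean0 u u = u := by
  simp [logMean0, hu.not_ge]

theorem logMean0_of_ne (hu : 0 < u) (hv : 0 < v) (h : u ≠ v) :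
    logMean0 u v = (u - v) / (log u - log v) := by
  simp [logMean0, hu.not_ge, hv.not_ge, h]

theorem logMean0_comm (u v : ℝ) : logMean0 u v = logMean0 v u := by
  by_cases h : u ≤ 0 ∨ v ≤ 0
  · rw [logMean0_of_nonpos h, logMean0_of_nonpos h.symm]
  obtain ⟨hu, hv⟩ : 0 < u ∧ 0 < v := by simpa [not_or] using h
  rcases eq_or_ne u v with rfl | huv
  · rfl
  · rw [logMean0_of_ne hu hv huv, logMean0_of_ne hv hu huv.symm, ← neg_sub v, ← neg_sub (log v),
      neg_div_neg_eq]

theorem logMean0_mem_Icc (hu : 0 < u) (huv : u ≤ v) : logMean0 u v ∈ Icc u v := by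
  rcases huv.eq_or_lt with rfl | huv
  · simp [logMean0_self hu]
  have hv : 0 < v := hu.trans huv
  have hpos : 0 < log v - log u := sub_pos.2 (log_lt_log hu huv)
  have hupper : log (v / u) ≤ v / u - 1 := log_le_sub_one_of_pos (by positivity)
  have hlower : 1 - (v / u)⁻¹ ≤ log (v / u) := one_sub_inv_le_log_of_pos (by positivity)
  rw [inv_div, log_div hv.ne' hu.ne'] at hlower
  rw [log_div hv.ne' hu.ne'] at hupper
  rw [logMean0_comm, logMean0_of_ne hv hu huv.ne', mem_Icc, le_div_iff₀ hpos, div_le_iff₀ hpos]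
  constructor
  · calc u * (log v - log u) ≤ u * (v / u - 1) := mul_le_mul_of_nonneg_left hupper hu.le
      _ = v - u := by field_simp
  · calc v - u = v * (1 - u / v) := by field_simp
      _ ≤ v * (log v - log u) := mul_le_mul_of_nonneg_left hlower hv.le

theorem logMean0_mem_Icc_min_max (hu : 0 < u) (hv : 0 < v) :
    logMean0 u v ∈ Icc (min u v) (max u v) := by
  rcases le_total u v with huv | hvu
  · simpa [huv] using logMean0_mem_Icc hu huv
  · simpa [hvu, logMean0_comm u v] using logMean0_mem_Icc hv hvu

theorem logMean0_pos (hu : 0 < u) (hv : 0 < v) : 0 < logMean0 u v :=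
  (lt_min hu hv).trans_le (logMean0_mem_Icc_min_max hu hv).1

theorem logMean0_nonneg (u v : ℝ) : 0 ≤ logMean0 u v := by
  by_cases h : u ≤ 0 ∨ v ≤ 0
  · exact (logMean0_of_nonpos h).ge
  · obtain ⟨hu, hv⟩ : 0 < u ∧ 0 < v := by simpa [not_or] using h
    exact (logMean0_pos hu hv).le

theorem logMean0_le_norm (q : ℝ × ℝ) : uncurry logMean0 q ≤ ‖q‖ := by
  by_cases h : q.1 ≤ 0 ∨ q.2 ≤ 0
  · exact (logMean0_of_nonpos h).trans_le (norm_nonneg q)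
  · obtain ⟨hu, hv⟩ : 0 < q.1 ∧ 0 < q.2 := by simpa [not_or] using h
    calc uncurry logMean0 q ≤ max q.1 q.2 := (logMean0_mem_Icc_min_max hu hv).2
      _ ≤ ‖q‖ := by
        rw [Prod.norm_def]
        exact max_le_max (le_norm_self _) (le_norm_self _)

theorem logMean0_le_div_log (hu : 0 < u) (huv : u < v) :
    logMean0 u v ≤ v / (log v - log u) := by
  rw [logMean0_comm, logMean0_of_ne (hu.trans huv) hu huv.ne']
  exact div_le_div_of_nonneg_right (by linarith) (sub_pos.2 (log_lt_log hu huv)).le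

end logMean0

section continuity

variable {s t : ℝ}

theorem continuousAt_logMean0 (hs : 0 < s) (ht : 0 < t) :
    ContinuousAt (uncurry logMean0) (s, t) := by
  have hpos : ∀ᶠ q : ℝ × ℝ in 𝓝 (s, t), 0 < q.1 ∧ 0 < q.2 :=
    (continuousAt_fst.eventually (lt_mem_nhds hs)).and
      (continuousAt_snd.eventually (lt_mem_nhds ht))
  rcases eq_or_ne s t with rfl | hst
  · rw [ContinuousAt, uncurry_apply_pair, logMean0_self hs]
    have hmin := (continuous_fst.min continuous_snd).tendsto (s, s)
    have hmax := (continuous_fst.max continuous_snd).tendsto (s, s)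
    simp only [min_self, max_self] at hmin hmax
    refine tendsto_of_tendsto_of_tendsto_of_le_of_le' hmin hmax ?_ ?_ <;>
      filter_upwards [hpos] with q hq
    exacts [(logMean0_mem_Icc_min_max hq.1 hq.2).1, (logMean0_mem_Icc_min_max hq.1 hq.2).2]
  · have hlog : log s - log t ≠ 0 := sub_ne_zero.2 fun h =>
      hst (log_injOn_pos (mem_Ioi.2 hs) (mem_Ioi.2 ht) h)
    have hformula : ContinuousAt (fun q : ℝ × ℝ => (q.1 - q.2) / (log q.1 - log q.2)) (s, t) :=
      (continuousAt_fst.sub continuousAt_snd).div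
        ((continuousAt_fst.log hs.ne').sub (continuousAt_snd.log ht.ne')) hlog
    refine hformula.congr ?_
    filter_upwards [hpos, (isOpen_ne_fun continuous_fst continuous_snd).mem_nhds hst]
      with q hq hne
    exact (logMean0_of_ne hq.1 hq.2 hne).symm

theorem tendsto_logMean0_zero_of_pos (ht : 0 < t) :
    Tendsto (uncurry logMean0) (𝓝 (0, t)) (𝓝 0) := by
  rw [nhds_eq_nhdsWithin_sup_nhdsWithin (0, t) (I₁ := {q | q.1 ≤ 0}) (I₂ := {q | 0 < q.1})
    (by ext; simp [le_or_gt])]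
  refine Tendsto.sup ?_ ?_
  · refine tendsto_const_nhds.congr' (eventually_nhdsWithin_of_forall fun q hq => ?_)
    exact (logMean0_of_nonpos (.inl hq)).symm
  · have hfst : Tendsto Prod.fst (𝓝[{q : ℝ × ℝ | 0 < q.1}] (0, t)) (𝓝[>] 0) :=
      tendsto_nhdsWithin_iff.2 ⟨continuousWithinAt_fst.tendsto,
        eventually_nhdsWithin_of_forall fun q hq => hq⟩
    have hsnd : Tendsto Prod.snd (𝓝[{q : ℝ × ℝ | 0 < q.1}] (0, t)) (𝓝 t) :=
      continuousWithinAt_snd.tendsto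
    have hgap : Tendsto (fun q : ℝ × ℝ => log q.2 - log q.1)
        (𝓝[{q : ℝ × ℝ | 0 < q.1}] (0, t)) atTop := by
      simpa only [sub_eq_add_neg, comp_apply] using
        ((continuousAt_log ht.ne').tendsto.comp hsnd).add_atTop
          (tendsto_neg_atBot_atTop.comp (tendsto_log_nhdsGT_zero.comp hfst))
    refine tendsto_of_tendsto_of_tendsto_of_le_of_le' tendsto_const_nhds (hsnd.div_atTop hgap)
      (Eventually.of_forall fun q => logMean0_nonneg q.1 q.2) ?_
    filter_upwards [hfst.eventually (Ioo_mem_nhdsGT (half_pos ht)),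
      hsnd.eventually (lt_mem_nhds (half_lt_self ht))] with q hq₁ hq₂
    exact logMean0_le_div_log hq₁.1 (hq₁.2.trans hq₂)

theorem tendsto_logMean0_of_nonpos (h : s ≤ 0 ∨ t ≤ 0) :
    Tendsto (uncurry logMean0) (𝓝 (s, t)) (𝓝 0) := by
  wlog hs : s ≤ 0 generalizing s t
  · exact (this h.symm (h.resolve_left hs)).comp (continuous_swap.tendsto (s, t)) |>.congr
      fun q => logMean0_comm q.2 q.1
  rcases hs.lt_or_eq with hs | rfl
  · refine tendsto_const_nhds.congr' ?_
    filter_upwards [continuousAt_fst.eventually (gt_mem_nhds hs)] with q hq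
    exact (logMean0_of_nonpos (.inl hq.le)).symm
  rcases lt_trichotomy t 0 with ht | rfl | ht
  · refine tendsto_const_nhds.congr' ?_
    filter_upwards [continuousAt_snd.eventually (gt_mem_nhds ht)] with q hq
    exact (logMean0_of_nonpos (.inr hq.le)).symm
  · rw [Prod.mk_zero_zero]
    exact squeeze_zero (fun q => logMean0_nonneg q.1 q.2) logMean0_le_norm tendsto_norm_zero
  · exact tendsto_logMean0_zero_of_pos ht

theorem continuous_logMean0 : Continuous (uncurry logMean0) := by
  refine continuous_iff_continuousAt.2 fun ⟨s, t⟩ => ?_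
  by_cases h : s ≤ 0 ∨ t ≤ 0
  · rw [ContinuousAt, uncurry_apply_pair, logMean0_of_nonpos h]
    exact tendsto_logMean0_of_nonpos h
  · obtain ⟨hs, ht⟩ : 0 < s ∧ 0 < t := by simpa [not_or] using h
    exact continuousAt_logMean0 hs ht

end continuity

theorem alphaE_eq_div (v s t : ℝ) :
    alphaE v s t = ENNReal.ofReal (v ^ 2) / ENNReal.ofReal (logMean0 s t) := by
  rcases (logMean0_nonneg s t).eq_or_lt with h | h
  · rw [alphaE, if_pos h.symm, ← h, ENNReal.ofReal_zero]
    split_ifs with hv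
    · simp [hv]
    · exact (ENNReal.div_zero (ENNReal.ofReal_pos.2 (by positivity)).ne').symm
  · rw [alphaE, if_neg h.ne', ENNReal.ofReal_div_of_pos h]

/-- α is lower semicontinuous on ℝ × [0,∞)². -/
theorem alphaE_lowerSemicontinuous :
    LowerSemicontinuousOn (fun p : ℝ × ℝ × ℝ => alphaE p.1 p.2.1 p.2.2)
      {p : ℝ × ℝ × ℝ | 0 ≤ p.2.1 ∧ 0 ≤ p.2.2} := by
  simp only [alphaE_eq_div]
  exact (ENNReal.lowerSemicontinuous_div (ENNReal.continuous_ofReal.comp (by fun_prop))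
    (ENNReal.continuous_ofReal.comp (continuous_logMean0.comp continuous_snd))
    fun _ => ENNReal.ofReal_ne_top).lowerSemicontinuousOn _
end
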